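/- For a bounded continuous function σ : ℂ → ℝ define the conformal distance d_σ(x,y) = inf over all continuously differentiable paths α : [0,1] → ℂ with α(0) = x and α(1) = y of ∫₀¹ exp(σ(α(t))/2) |α'(t)| dt. Then for every x ∈ ℂ, lim_{y → x, y ≠ x} ( log d_σ(x,y) − log|x − y| ) = σ(x)/2. -/

import Mathlib

/-!
Near `x` the conformal factor `e^{σ/2}` lies between `e^{(σ(x) ± ε)/2}`. The straight segment
from `x` to `y` gives `d_σ(x, y) ≤ e^{(σ(x) + ε)/2} |y - x|`. Conversely, every path from `x` to `y`
runs inside the closed ball of radius `|y - x|` around `x` until it first reaches its boundary, and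
that part alone has weighted length at least `e^{(σ(x) - ε)/2} |y - x|`.
-/

open Real Filter Topology

/-- The Riemannian distance of the conformal metric `e^{σ(z)}|dz|²` on the plane:
the infimum of `∫₀¹ e^{σ(α(t))/2} |α'(t)| dt` over `C¹` paths from `x` to `y`. -/
noncomputable def confDist (σ : ℂ → ℝ) (x y : ℂ) : ℝ :=
  sInf { L : ℝ | ∃ α : ℝ → ℂ, ContDiff ℝ 1 α ∧ α 0 = x ∧ α 1 = y ∧
    L = ∫ t in (0 : ℝ)..1, Real.exp (σ (α t) / 2) * ‖deriv α t‖ }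

open Metric Set

section PathLength

variable {E : Type*} [NormedAddCommGroup E] [NormedSpace ℝ E]

theorem norm_sub_le_integral_norm_deriv [CompleteSpace E] {α : ℝ → E} (hα : ContDiff ℝ 1 α)
    {a b : ℝ} (hab : a ≤ b) : ‖α b - α a‖ ≤ ∫ t in a..b, ‖deriv α t‖ := by
  rw [← intervalIntegral.integral_deriv_eq_sub (fun t _ => hα.differentiable one_ne_zero t)
    ((hα.continuous_deriv le_rfl).intervalIntegrable _ _)]
  exact intervalIntegral.norm_integral_le_integral_norm hab

theorem mul_le_integral_weight_mul_norm_deriv [CompleteSpace E] {w : E → ℝ} (hw : Continuous w)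
    (hw₀ : ∀ z, 0 ≤ w z) {α : ℝ → E} (hα : ContDiff ℝ 1 α) {c ρ : ℝ} (hc : 0 ≤ c)
    (hcw : ∀ z ∈ closedBall (α 0) ρ, c ≤ w z) (hρ : ρ ≤ ‖α 1 - α 0‖) :
    c * ρ ≤ ∫ t in (0 : ℝ)..1, w (α t) * ‖deriv α t‖ := by
  have hα' : Continuous fun t => ‖deriv α t‖ := (hα.continuous_deriv le_rfl).norm
  have hwα : Continuous fun t => w (α t) * ‖deriv α t‖ := (hw.comp hα.continuous).mul hα'
  set S := Icc (0 : ℝ) 1 ∩ {t | ρ ≤ ‖α t - α 0‖}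
  have hS : IsCompact S :=
    isCompact_Icc.inter_right
      (isClosed_le continuous_const (hα.continuous.sub continuous_const).norm)
  -- `b` is the first time the path reaches distance `ρ` from its starting point.
  set b := sInf S
  obtain ⟨⟨hb₀, hb₁⟩, hρb⟩ : b ∈ S := hS.sInf_mem ⟨1, ⟨zero_le_one, le_rfl⟩, hρ⟩
  have hinside : ∀ t ∈ Ioo 0 b, α t ∈ closedBall (α 0) ρ := fun t ht => by
    rw [mem_closedBall, dist_eq_norm]
    by_contra! h
    exact (csInf_le hS.bddBelow ⟨⟨ht.1.le, ht.2.le.trans hb₁⟩, h.le⟩).not_gt ht.2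
  calc c * ρ ≤ c * ∫ t in (0 : ℝ)..b, ‖deriv α t‖ :=
        mul_le_mul_of_nonneg_left (hρb.trans (norm_sub_le_integral_norm_deriv hα hb₀)) hc
    _ = ∫ t in (0 : ℝ)..b, c * ‖deriv α t‖ := (intervalIntegral.integral_const_mul _ _).symm
    _ ≤ ∫ t in (0 : ℝ)..b, w (α t) * ‖deriv α t‖ :=
        intervalIntegral.integral_mono_on_of_le_Ioo hb₀
          ((continuous_const.mul hα').intervalIntegrable _ _) (hwα.intervalIntegrable _ _)
          fun t ht => mul_le_mul_of_nonneg_right (hcw _ (hinside t ht)) (norm_nonneg _)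
    _ ≤ ∫ t in (0 : ℝ)..1, w (α t) * ‖deriv α t‖ :=
        intervalIntegral.integral_mono_interval le_rfl hb₀ hb₁
          (Eventually.of_forall fun t => mul_nonneg (hw₀ _) (norm_nonneg _))
          (hwα.intervalIntegrable _ _)

theorem hasDerivAt_segment (x y : E) (t : ℝ) :
    HasDerivAt (fun s : ℝ => x + s • (y - x)) (y - x) t := by
  simpa using ((hasDerivAt_id t).smul_const (y - x)).const_add x

theorem segment_mem_closedBall {x y : E} {t : ℝ} (ht : t ∈ Icc (0 : ℝ) 1) :
    x + t • (y - x) ∈ closedBall x ‖y - x‖ := by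
  rw [mem_closedBall, dist_eq_norm, add_sub_cancel_left, norm_smul, Real.norm_of_nonneg ht.1]
  exact mul_le_of_le_one_left (norm_nonneg _) ht.2

end PathLength

theorem integral_segment_mem_confDist_set (σ : ℂ → ℝ) (x y : ℂ) :
    (∫ t in (0 : ℝ)..1, exp (σ (x + t • (y - x)) / 2) * ‖y - x‖) ∈
      { L : ℝ | ∃ α : ℝ → ℂ, ContDiff ℝ 1 α ∧ α 0 = x ∧ α 1 = y ∧
        L = ∫ t in (0 : ℝ)..1, Real.exp (σ (α t) / 2) * ‖deriv α t‖ } :=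
  ⟨fun t => x + t • (y - x), contDiff_const.add (contDiff_id.smul contDiff_const),
    by simp, by simp, by simp only [(hasDerivAt_segment x y _).deriv]⟩

theorem confDist_le {σ : ℂ → ℝ} (hσ : Continuous σ) {x y : ℂ} {b : ℝ}
    (hb : ∀ z ∈ closedBall x ‖y - x‖, σ z ≤ b) :
    confDist σ x y ≤ exp (b / 2) * ‖y - x‖ := by
  have hbdd : BddBelow { L : ℝ | ∃ α : ℝ → ℂ, ContDiff ℝ 1 α ∧ α 0 = x ∧ α 1 = y ∧
      L = ∫ t in (0 : ℝ)..1, Real.exp (σ (α t) / 2) * ‖deriv α t‖ } := by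
    refine ⟨0, ?_⟩
    rintro L ⟨α, -, -, -, rfl⟩
    exact intervalIntegral.integral_nonneg zero_le_one fun t _ => by positivity
  refine csInf_le_of_le hbdd (integral_segment_mem_confDist_set σ x y) ?_
  have hcont : Continuous fun t : ℝ => exp (σ (x + t • (y - x)) / 2) * ‖y - x‖ := by fun_prop
  calc (∫ t in (0 : ℝ)..1, exp (σ (x + t • (y - x)) / 2) * ‖y - x‖)
      ≤ ∫ _ in (0 : ℝ)..1, exp (b / 2) * ‖y - x‖ :=
        intervalIntegral.integral_mono_on zero_le_one (hcont.intervalIntegrable _ _)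
          intervalIntegrable_const fun t ht => by
            gcongr
            exact hb _ (segment_mem_closedBall ht)
    _ = exp (b / 2) * ‖y - x‖ := by simp

theorem le_confDist {σ : ℂ → ℝ} (hσ : Continuous σ) {x y : ℂ} {a : ℝ}
    (ha : ∀ z ∈ closedBall x ‖y - x‖, a ≤ σ z) :
    exp (a / 2) * ‖y - x‖ ≤ confDist σ x y := by
  refine le_csInf ⟨_, integral_segment_mem_confDist_set σ x y⟩ ?_
  rintro L ⟨α, hα, rfl, rfl, rfl⟩
  exact mul_le_integral_weight_mul_norm_deriv (w := fun z => exp (σ z / 2)) (by fun_prop)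
    (fun _ => (exp_pos _).le) hα (exp_pos _).le
    (fun z hz => exp_le_exp.mpr (by linarith [ha z hz])) le_rfl

theorem log_confDist_sub_log_norm_mem_Icc {σ : ℂ → ℝ} (hσ : Continuous σ) {x y : ℂ}
    (hxy : y ≠ x) {a b : ℝ} (hab : ∀ z ∈ closedBall x ‖y - x‖, σ z ∈ Icc a b) :
    log (confDist σ x y) - log ‖x - y‖ ∈ Icc (a / 2) (b / 2) := by
  have hρ : 0 < ‖y - x‖ := norm_pos_iff.mpr (sub_ne_zero.mpr hxy)
  have hlower := le_confDist hσ fun z hz => (hab z hz).1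
  have hupper := confDist_le hσ fun z hz => (hab z hz).2
  have hd : 0 < confDist σ x y := (by positivity : 0 < exp (a / 2) * ‖y - x‖).trans_le hlower
  have hlog : ∀ c, log (exp (c / 2) * ‖y - x‖) = c / 2 + log ‖y - x‖ := fun c => by
    rw [log_mul (exp_ne_zero _) hρ.ne', log_exp]
  rw [norm_sub_rev]
  constructor
  · linarith [hlog a, log_le_log (by positivity) hlower]
  · linarith [hlog b, log_le_log hd hupper]

theorem confDist_log_limit_general
    (σ : ℂ → ℝ) (hσc : Continuous σ) (x : ℂ) :
    Tendsto (fun y => Real.log (confDist σ x y) - Real.log (‖x - y‖))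
      (𝓝[≠] x) (𝓝 (σ x / 2)) := by
  rw [Metric.tendsto_nhds]
  intro ε hε
  obtain ⟨δ, hδ, hσδ⟩ := Metric.continuousAt_iff.mp hσc.continuousAt ε hε
  filter_upwards [self_mem_nhdsWithin, nhdsWithin_le_nhds (ball_mem_nhds x hδ)] with y hyx hyδ
  have hσ_near : ∀ z ∈ closedBall x ‖y - x‖, σ z ∈ Icc (σ x - ε) (σ x + ε) := fun z hz => by
    have := abs_sub_lt_iff.mp (hσδ ((mem_closedBall.mp hz).trans_lt (mem_ball_iff_norm.mp hyδ)))
    constructor <;> linarith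
  obtain ⟨hlow, hupp⟩ := log_confDist_sub_log_norm_mem_Icc hσc hyx hσ_near
  rw [Real.dist_eq, abs_lt]
  constructor <;> linarith

/-- Logarithmic comparison of the conformal distance with the Euclidean distance:
`log d_σ(x,y) - log|x-y| → σ(x)/2` as `y → x`. -/
theorem confDist_log_limit
    (σ : ℂ → ℝ) (hσc : Continuous σ) (hσb : ∃ M : ℝ, ∀ z, |σ z| ≤ M) (x : ℂ) :
    Tendsto (fun y => Real.log (confDist σ x y) - Real.log (‖x - y‖))
      (𝓝[≠] x) (𝓝 (σ x / 2)) :=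
  confDist_log_limit_general σ hσc x
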